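/- (Time-averaging formula.) Let C_s : M_d(ℂ) → M_d(ℂ) denote the conjugation C_s(ρ) = e^{isH} ρ e^{−isH}. Then for every linear map X : M_d(ℂ) → M_d(ℂ), the time averages (1/(2t)) ∫_{−t}^{t} C_{−s} ∘ X ∘ C_s ds converge in operator norm, as t → ∞, to X^♯ := Σ_ω E_ω ∘ X ∘ E_ω, where the sum runs over all Bohr frequencies of H. -/

import Mathlib

open Matrix Filter

noncomputable section

attribute [local instance] Matrix.normedAddCommGroup Matrix.normedSpace

/-- The rank-one orthogonal projection `P_k = |φ_k⟩⟨φ_k|` onto the `k`-th basis vector. -/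
def eigProj {d : ℕ} (v : Fin d → Fin d → ℂ) (k : Fin d) : Matrix (Fin d) (Fin d) ℂ :=
  Matrix.vecMulVec (v k) (star (v k))

/-- The Hamiltonian `H = Σ_k ε_k P_k`. -/
def hamOf {d : ℕ} (ε : Fin d → ℝ) (v : Fin d → Fin d → ℂ) : Matrix (Fin d) (Fin d) ℂ :=
  ∑ k, (ε k : ℂ) • eigProj v k

/-- The (finite) set of Bohr frequencies `{ε_k − ε_l}` of `H`. -/
def bohrSet {d : ℕ} (ε : Fin d → ℝ) : Finset ℝ :=
  Finset.image (fun p : Fin d × Fin d => ε p.1 - ε p.2) Finset.univ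

/-- The map `E_ω(ρ) = Σ_{(k,l): ε_k−ε_l=ω} P_k ρ P_l` as a continuous linear map. -/
def bohrProjL {d : ℕ} (ε : Fin d → ℝ) (v : Fin d → Fin d → ℂ) (ω : ℝ) :
    Matrix (Fin d) (Fin d) ℂ →L[ℂ] Matrix (Fin d) (Fin d) ℂ :=
  LinearMap.toContinuousLinearMap <|
    ∑ k, ∑ l, (if ε k - ε l = ω then (1:ℂ) else 0) •
      ((LinearMap.mulLeft ℂ (eigProj v k)).comp (LinearMap.mulRight ℂ (eigProj v l)))

/-- The conjugation `C_s(ρ) = e^{isH} ρ e^{−isH}` as a continuous linear map. -/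
def conjCLM {d : ℕ} (H : Matrix (Fin d) (Fin d) ℂ) (s : ℝ) :
    Matrix (Fin d) (Fin d) ℂ →L[ℂ] Matrix (Fin d) (Fin d) ℂ :=
  LinearMap.toContinuousLinearMap <|
    (LinearMap.mulLeft ℂ (NormedSpace.exp ((Complex.I * s) • H))).comp
      (LinearMap.mulRight ℂ (NormedSpace.exp ((-(Complex.I * s)) • H)))

/-- Port helper: the standard operator-norm normed group structure on `M_d(ℂ) →L[ℂ] M_d(ℂ)`; the
current instance search no longer unifies the matrix topology with the one from the local norm. -/
instance matCLMNormedAddCommGroup {d : ℕ} :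
    NormedAddCommGroup (Matrix (Fin d) (Fin d) ℂ →L[ℂ] Matrix (Fin d) (Fin d) ℂ) :=
  ContinuousLinearMap.toNormedAddCommGroup

/-- Port helper: the standard real normed-space structure (pointwise scalar action), as above. -/
instance matCLMNormedSpaceReal {d : ℕ} :
    NormedSpace ℝ (Matrix (Fin d) (Fin d) ℂ →L[ℂ] Matrix (Fin d) (Fin d) ℂ) :=
  ContinuousLinearMap.toNormedSpace

/-!
Writing `H = W diag(ε) Wᴴ` with `W` the unitary whose columns are the `φ_k`, the conjugation
`C_s` becomes `Σ_{k,l} e^{is(ε_k − ε_l)} P_k · P_l`, so `C_{−s} ∘ X ∘ C_s` is a finite sum of the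
maps `(P_k · P_l) ∘ X ∘ (P_{k'} · P_{l'})` with phases `e^{is(ω' − ω)}`, where `ω = ε_k − ε_l` and
`ω' = ε_{k'} − ε_{l'}`. The time average of `e^{isθ}` is `1` for `θ = 0` and `O(1/(t|θ|))`
otherwise, so in the limit exactly the terms with `ω = ω'` survive, and these add up to
`Σ_ω E_ω ∘ X ∘ E_ω`.
-/

open scoped Topology
open Complex

theorem Finset.sum_sum_filter_prod_filter_eq {ι β M : Type*} [Fintype ι] [DecidableEq β]
    [AddCommMonoid M] {f : ι → β} {S : Finset β} (hS : ∀ i, f i ∈ S) (g : ι × ι → M) :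
    ∑ ω ∈ S, ∑ q ∈ ({i | f i = ω} : Finset ι) ×ˢ ({j | f j = ω} : Finset ι), g q =
      ∑ q with f q.1 = f q.2, g q := by
  rw [← Finset.sum_fiberwise_of_maps_to (g := fun q : ι × ι => f q.1) fun q _ => hS q.1]
  refine Finset.sum_congr rfl fun ω _ => Finset.sum_congr ?_ fun _ _ => rfl
  ext ⟨i, j⟩
  simp only [Finset.mem_product, Finset.mem_filter, Finset.mem_univ, true_and]
  grind

theorem ContinuousLinearMap.sum_comp_comp_sum {R M ι κ : Type*} [Semiring R] [TopologicalSpace M]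
    [AddCommMonoid M] [Module R M] [ContinuousAdd M] (s : Finset ι) (t : Finset κ)
    (A : ι → M →L[R] M) (X : M →L[R] M) (B : κ → M →L[R] M) :
    (∑ i ∈ s, A i).comp (X.comp (∑ j ∈ t, B j)) =
      ∑ q ∈ s ×ˢ t, (A q.1).comp (X.comp (B q.2)) := by
  rw [finsetSum_comp, Finset.sum_product]
  simp only [comp_finsetSum]

theorem norm_intervalIntegral_cexp_mul_I_le {θ : ℝ} (hθ : θ ≠ 0) (t : ℝ) :
    ‖∫ s in (-t)..t, cexp (θ * s * I)‖ ≤ 2 / |θ| := by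
  have hc : (θ * I : ℂ) ≠ 0 := mul_ne_zero (ofReal_ne_zero.mpr hθ) I_ne_zero
  have hunit (u : ℝ) : ‖cexp (θ * I * u)‖ = 1 := by
    rw [show (θ * I * u : ℂ) = (θ * u : ℝ) * I by push_cast; ring, norm_exp_ofReal_mul_I]
  calc ‖∫ s in (-t)..t, cexp (θ * s * I)‖
      = ‖(cexp (θ * I * t) - cexp (θ * I * (-t : ℝ))) / (θ * I)‖ := by
        rw [← integral_exp_mul_complex hc]
        congr 1
        exact intervalIntegral.integral_congr fun s _ => by ring_nf
    _ ≤ (1 + 1) / |θ| := by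
        rw [norm_div, norm_mul, norm_I, mul_one, norm_real, Real.norm_eq_abs]
        gcongr
        exact (norm_sub_le _ _).trans_eq (by rw [hunit, hunit])
    _ = 2 / |θ| := by norm_num

theorem tendsto_timeAverage_cexp_mul_I (θ : ℝ) :
    Tendsto (fun t : ℝ => (1 / (2 * t)) • ∫ s in (-t)..t, cexp (θ * s * I))
      atTop (𝓝 (if θ = 0 then 1 else 0)) := by
  split_ifs with hθ
  · refine tendsto_const_nhds.congr' ?_
    filter_upwards [eventually_gt_atTop 0] with t ht
    have ht' : (t : ℂ) ≠ 0 := ofReal_ne_zero.mpr ht.ne'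
    simp [hθ]
    field_simp
    ring
  · refine squeeze_zero_norm' (a := fun t => (1 / (2 * t)) * (2 / |θ|)) ?_ ?_
    · filter_upwards [eventually_gt_atTop 0] with t ht
      rw [norm_smul, Real.norm_of_nonneg (by positivity)]
      gcongr
      exact norm_intervalIntegral_cexp_mul_I_le hθ t
    · simpa using
        (tendsto_inv_atTop_zero.comp (tendsto_id.const_mul_atTop two_pos)).mul_const (2 / |θ|)

theorem tendsto_timeAverage_sum_cexp_smul {ι E : Type*} [Fintype ι] [NormedAddCommGroup E]
    [NormedSpace ℂ E] [CompleteSpace E] (θ : ι → ℝ) (G : ι → E) :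
    Tendsto (fun t : ℝ => (1 / (2 * t)) • ∫ s in (-t)..t, ∑ p, cexp (θ p * s * I) • G p)
      atTop (𝓝 (∑ p with θ p = 0, G p)) := by
  have hint (t : ℝ) : (1 / (2 * t)) • ∫ s in (-t)..t, ∑ p, cexp (θ p * s * I) • G p =
      ∑ p, ((1 / (2 * t)) • ∫ s in (-t)..t, cexp (θ p * s * I)) • G p := by
    rw [intervalIntegral.integral_finsetSum fun p _ =>
      (by fun_prop : Continuous _).intervalIntegrable _ _]
    simp only [intervalIntegral.integral_smul_const, Finset.smul_sum, smul_assoc]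
  have hlim := tendsto_finsetSum Finset.univ fun p _ =>
    (tendsto_timeAverage_cexp_mul_I (θ p)).smul_const (G p)
  simp only [ite_smul, one_smul, zero_smul, ← Finset.sum_filter] at hlim
  exact hlim.congr fun t => (hint t).symm

section Spectral

variable {d : ℕ} {ε : Fin d → ℝ} {v : Fin d → Fin d → ℂ}

def eigenbasisMatrix (v : Fin d → Fin d → ℂ) : Matrix (Fin d) (Fin d) ℂ :=
  Matrix.of fun i k => v k i

theorem eigenbasisMatrix_mul_diagonal_mul_conjTranspose (v : Fin d → Fin d → ℂ)
    (f : Fin d → ℂ) :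
    eigenbasisMatrix v * diagonal f * (eigenbasisMatrix v)ᴴ = ∑ k, f k • eigProj v k := by
  ext i j
  rw [mul_apply]
  simp only [mul_diagonal, conjTranspose_apply, eigenbasisMatrix, of_apply, Matrix.sum_apply,
    Matrix.smul_apply, eigProj, vecMulVec_apply, Pi.star_apply, smul_eq_mul]
  exact Finset.sum_congr rfl fun k _ => by ring

theorem conjTranspose_eigenbasisMatrix_mul_self
    (hv : ∀ k l, star (v k) ⬝ᵥ v l = if k = l then (1:ℂ) else 0) :
    (eigenbasisMatrix v)ᴴ * eigenbasisMatrix v = 1 := by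
  ext k l
  simpa [mul_apply, eigenbasisMatrix, one_apply, dotProduct, mul_comm] using hv k l

theorem exp_sum_smul_eigProj (hv : ∀ k l, star (v k) ⬝ᵥ v l = if k = l then (1:ℂ) else 0)
    (f : Fin d → ℂ) :
    NormedSpace.exp (∑ k, f k • eigProj v k) = ∑ k, cexp (f k) • eigProj v k := by
  have hW := conjTranspose_eigenbasisMatrix_mul_self hv
  let W : (Matrix (Fin d) (Fin d) ℂ)ˣ := ⟨_, _, mul_eq_one_comm.mp hW, hW⟩
  simp only [← eigenbasisMatrix_mul_diagonal_mul_conjTranspose]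
  refine (Matrix.exp_units_conj W (diagonal f)).trans ?_
  rw [Matrix.exp_diagonal, Pi.exp_def, ← Complex.exp_eq_exp_ℂ]
  rfl

theorem exp_smul_hamOf (hv : ∀ k l, star (v k) ⬝ᵥ v l = if k = l then (1:ℂ) else 0) (c : ℂ) :
    NormedSpace.exp (c • hamOf ε v) = ∑ k, cexp (c * ε k) • eigProj v k := by
  rw [hamOf, Finset.smul_sum]
  simp_rw [smul_smul]
  exact exp_sum_smul_eigProj hv _

end Spectral

section Sandwich

variable {d : ℕ} {ε : Fin d → ℝ} {v : Fin d → Fin d → ℂ}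

def eigSandwich (v : Fin d → Fin d → ℂ) (p : Fin d × Fin d) :
    Matrix (Fin d) (Fin d) ℂ →L[ℂ] Matrix (Fin d) (Fin d) ℂ :=
  LinearMap.toContinuousLinearMap <|
    (LinearMap.mulLeft ℂ (eigProj v p.1)).comp (LinearMap.mulRight ℂ (eigProj v p.2))

def bohrFreq (ε : Fin d → ℝ) (p : Fin d × Fin d) : ℝ :=
  ε p.1 - ε p.2

theorem bohrFreq_mem_bohrSet (ε : Fin d → ℝ) (p : Fin d × Fin d) : bohrFreq ε p ∈ bohrSet ε :=
  Finset.mem_image_of_mem _ (Finset.mem_univ p)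

theorem conjCLM_hamOf (hv : ∀ k l, star (v k) ⬝ᵥ v l = if k = l then (1:ℂ) else 0) (s : ℝ) :
    conjCLM (hamOf ε v) s = ∑ p, cexp (bohrFreq ε p * s * I) • eigSandwich v p := by
  ext1 ρ
  simp only [conjCLM, eigSandwich, LinearMap.coe_toContinuousLinearMap', LinearMap.comp_apply,
    LinearMap.mulLeft_apply, LinearMap.mulRight_apply, exp_smul_hamOf hv, _root_.sum_apply,
    _root_.smul_apply, Finset.mul_sum, Finset.sum_mul, smul_mul_assoc, mul_smul_comm,
    Finset.smul_sum, smul_smul, Fintype.sum_prod_type, bohrFreq]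
  rw [Finset.sum_comm]
  refine Finset.sum_congr rfl fun k _ => Finset.sum_congr rfl fun l _ => ?_
  rw [← Complex.exp_add]
  congr 2
  push_cast
  ring

theorem bohrProjL_eq_sum (ε : Fin d → ℝ) (v : Fin d → Fin d → ℂ) (ω : ℝ) :
    bohrProjL ε v ω = ∑ p with bohrFreq ε p = ω, eigSandwich v p := by
  rw [Finset.sum_filter, Fintype.sum_prod_type]
  simp only [bohrProjL, eigSandwich, bohrFreq, ite_smul, one_smul, zero_smul, map_sum, apply_ite,
    map_zero]
  congr!

end Sandwich

section Instances

variable {d : ℕ}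

/- The operator norm on `M_d(ℂ) →L[ℂ] M_d(ℂ)` comes from a local norm on `M_d(ℂ)`, so instance
search does not find these two structures compatible with it by itself. -/
instance matCLMNormedSpace :
    NormedSpace ℂ (Matrix (Fin d) (Fin d) ℂ →L[ℂ] Matrix (Fin d) (Fin d) ℂ) :=
  ContinuousLinearMap.toNormedSpace

instance matCLMCompleteSpace :
    @CompleteSpace (Matrix (Fin d) (Fin d) ℂ →L[ℂ] Matrix (Fin d) (Fin d) ℂ)
      matCLMNormedAddCommGroup.toUniformSpace :=
  FiniteDimensional.complete ℂ (E := Matrix (Fin d) (Fin d) ℂ →L[ℂ] Matrix (Fin d) (Fin d) ℂ)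

end Instances

theorem stmt7 {d : ℕ} (ε : Fin d → ℝ) (v : Fin d → Fin d → ℂ)
    (hv : ∀ k l, star (v k) ⬝ᵥ v l = if k = l then (1:ℂ) else 0)
    (H : Matrix (Fin d) (Fin d) ℂ) (hH : H = hamOf ε v)
    (X : Matrix (Fin d) (Fin d) ℂ →L[ℂ] Matrix (Fin d) (Fin d) ℂ) :
    Tendsto
      (fun t : ℝ => (1 / (2 * t)) •
        ∫ s in (-t)..t, (conjCLM H (-s)).comp (X.comp (conjCLM H s)))
      atTop
      (nhds (∑ ω ∈ bohrSet ε, (bohrProjL ε v ω).comp (X.comp (bohrProjL ε v ω)))) := by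
  subst hH
  let G : (Fin d × Fin d) × (Fin d × Fin d) →
      (Matrix (Fin d) (Fin d) ℂ →L[ℂ] Matrix (Fin d) (Fin d) ℂ) := fun q =>
    (eigSandwich v q.1).comp (X.comp (eigSandwich v q.2))
  have hconj (s : ℝ) : (conjCLM (hamOf ε v) (-s)).comp (X.comp (conjCLM (hamOf ε v) s)) =
      ∑ q, cexp ((bohrFreq ε q.2 - bohrFreq ε q.1 : ℝ) * s * I) • G q := by
    rw [conjCLM_hamOf hv, conjCLM_hamOf hv, ContinuousLinearMap.sum_comp_comp_sum,
      Finset.univ_product_univ]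
    refine Finset.sum_congr rfl fun q _ => ?_
    rw [ContinuousLinearMap.smul_comp, ContinuousLinearMap.comp_smul,
      ContinuousLinearMap.comp_smul, smul_smul, ← Complex.exp_add]
    congr 2
    push_cast
    ring
  have hsharp : ∑ ω ∈ bohrSet ε, (bohrProjL ε v ω).comp (X.comp (bohrProjL ε v ω)) =
      ∑ q with bohrFreq ε q.2 - bohrFreq ε q.1 = 0, G q := by
    simp only [bohrProjL_eq_sum, ContinuousLinearMap.sum_comp_comp_sum]
    rw [Finset.sum_sum_filter_prod_filter_eq (bohrFreq_mem_bohrSet ε)]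
    simp only [sub_eq_zero, eq_comm]
    rfl
  simp only [hconj, hsharp]
  exact tendsto_timeAverage_sum_cexp_smul _ G
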